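/- Exact sparse recovery via ℓ1 minimization from a dual certificate: let R be a complex matrix with columns indexed by a finite set G, and let s be supported on S ⊆ G with the columns {R_g : g ∈ S} linearly independent. If there exists a vector q such that (R* q)_g = sign(s_g) for all g ∈ S and |(R* q)_g| < 1 for all g ∉ S, then s is the unique minimizer of: minimize ‖s'‖₁ subject to R s' = R s. -/

import Mathlib

/-!
Put `c = R* q`. Since `⟨c, s'⟩ = ⟨q, R s'⟩`, the functional `s' ↦ Re ⟨c, s'⟩` is constant on the
feasible set `R s' = R s`, and at `s` it equals `‖s‖₁` because `c` is the sign of `s` on its support.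
As `|c_g| ≤ 1` everywhere, `Re ⟨c, s'⟩ ≤ ‖s'‖₁`, strictly as soon as `s'` is nonzero somewhere off the
support, where `|c_g| < 1`. A feasible `s' ≠ s` vanishing off the support is impossible: `s' - s` would
be a nonzero combination of the independent columns `R_g`, `g ∈ S`, in the kernel of `R`.
-/

open Complex Finset Matrix

section

variable {𝕜 ι : Type*} [RCLike 𝕜] [Fintype ι]

theorem norm_div_norm_le_one (z : 𝕜) : ‖z / (‖z‖ : 𝕜)‖ ≤ 1 := by
  rw [norm_div, RCLike.norm_ofReal, abs_norm]
  exact div_self_le_one _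

theorem star_div_norm_mul_self (z : 𝕜) : star (z / (‖z‖ : 𝕜)) * z = ‖z‖ := by
  rw [star_div₀, RCLike.star_def, RCLike.conj_ofReal, div_mul_eq_mul_div, RCLike.conj_mul]
  by_cases hz : z = 0
  · simp [hz]
  · have : (‖z‖ : 𝕜) ≠ 0 := by simpa using hz
    field_simp

theorem star_dotProduct_eq_sum_norm {c s : ι → 𝕜}
    (hc : ∀ g, s g ≠ 0 → c g = s g / (‖s g‖ : 𝕜)) :
    star c ⬝ᵥ s = ∑ g, (‖s g‖ : 𝕜) := by
  refine Finset.sum_congr rfl fun g _ => ?_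
  by_cases hg : s g = 0
  · simp [hg]
  · rw [Pi.star_apply, hc g hg, star_div_norm_mul_self]

theorem re_star_mul_le_norm_mul_norm (a b : 𝕜) : RCLike.re (star a * b) ≤ ‖a‖ * ‖b‖ := by
  simpa using RCLike.re_le_norm (star a * b)

theorem re_star_dotProduct_lt_sum_norm {c x : ι → 𝕜} (hc : ∀ g, ‖c g‖ ≤ 1)
    (hlt : ∃ g, ‖c g‖ < 1 ∧ x g ≠ 0) : RCLike.re (star c ⬝ᵥ x) < ∑ g, ‖x g‖ := by
  obtain ⟨g₀, hc₀, hx₀⟩ := hlt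
  rw [dotProduct, map_sum]
  refine Finset.sum_lt_sum (fun g _ => ?_) ⟨g₀, Finset.mem_univ _, ?_⟩
  · calc RCLike.re (star (c g) * x g) ≤ ‖c g‖ * ‖x g‖ := re_star_mul_le_norm_mul_norm _ _
      _ ≤ ‖x g‖ := mul_le_of_le_one_left (norm_nonneg _) (hc g)
  · calc RCLike.re (star (c g₀) * x g₀) ≤ ‖c g₀‖ * ‖x g₀‖ := re_star_mul_le_norm_mul_norm _ _
      _ < ‖x g₀‖ := mul_lt_of_lt_one_left (norm_pos_iff.mpr hx₀) hc₀

end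

theorem Matrix.eq_zero_of_mulVec_eq_zero_of_linearIndepOn {R ι κ : Type*} [CommRing R]
    [Fintype ι] {A : Matrix κ ι R} {S : Set ι} (hA : LinearIndepOn R Aᵀ S) {v : ι → R}
    (hv : A *ᵥ v = 0) (hvS : ∀ g ∉ S, v g = 0) : v = 0 := by
  classical
  have hsum : ∑ g ∈ S.toFinset, v g • Aᵀ g = 0 := by
    rw [Finset.sum_subset (Finset.subset_univ _) fun g _ hg => by simp [hvS g (by simpa using hg)],
      ← vecMul_eq_sum, vecMul_transpose, hv]
  funext g
  by_cases hg : g ∈ S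
  · exact linearIndepOn_iff''.mp hA S.toFinset v (by simp)
      (fun g hg => hvS g (by simpa using hg)) hsum g (by simpa using hg)
  · exact hvS g hg

/-- Exact sparse recovery via ℓ1 minimization from a dual certificate: if there is `q`
with `(R* q)_g = sign(s_g)` on the support of `s`, `|(R* q)_g| < 1` off the support, and
the columns of `R` on the support are linearly independent, then `s` is the unique
minimizer of `minimize ‖s'‖₁ subject to R s' = R s`. -/
theorem l1_unique_minimizer_of_dual_certificate
    (m n : ℕ) (R : Matrix (Fin m) (Fin n) ℂ) (s : Fin n → ℂ)
    (hind : LinearIndependent ℂ (fun g : {g : Fin n // s g ≠ 0} => fun i => R i g))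
    (q : Fin m → ℂ)
    (hsig : ∀ g, s g ≠ 0 → Rᴴ.mulVec q g = s g / (‖s g‖ : ℂ))
    (hb : ∀ g, s g = 0 → ‖Rᴴ.mulVec q g‖ < 1) :
    ∀ s' : Fin n → ℂ, R.mulVec s' = R.mulVec s → s' ≠ s →
      ∑ g, ‖s g‖ < ∑ g, ‖s' g‖ := by
  intro s' heq hne
  set c := Rᴴ *ᵥ q
  have hc : ∀ g, ‖c g‖ ≤ 1 := fun g => by
    by_cases hg : s g = 0
    · exact (hb g hg).le
    · rw [hsig g hg]; exact norm_div_norm_le_one _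
  have hcs' : star c ⬝ᵥ s' = star c ⬝ᵥ s := by
    simp only [c, star_mulVec, conjTranspose_conjTranspose, ← dotProduct_mulVec, heq]
  obtain ⟨g₀, hs₀, hs'₀⟩ : ∃ g, s g = 0 ∧ s' g ≠ 0 := by
    by_contra! hsupp
    refine hne (sub_eq_zero.mp (eq_zero_of_mulVec_eq_zero_of_linearIndepOn (S := {g | s g ≠ 0})
      hind (by rw [mulVec_sub, heq, sub_self]) fun g hg => ?_))
    simp only [Set.mem_ofPred_eq, not_not] at hg
    simp [hg, hsupp g hg]
  calc ∑ g, ‖s g‖ = RCLike.re (star c ⬝ᵥ s') := by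
        rw [hcs', star_dotProduct_eq_sum_norm hsig]; simp
    _ < ∑ g, ‖s' g‖ := re_star_dotProduct_lt_sum_norm hc ⟨g₀, hb g₀ hs₀, hs'₀⟩
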